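/- The strategy IIS absorbs call-by-name: for all terms M and N, IIS(M) = N if and only if there exists a term P with bn(M) = P and IIS(P) = N; i.e., as big-step relations, IIS ∘ bn = IIS. -/
import Mathlib


/-- Pure λ-calculus terms (de Bruijn representation). -/
inductive Tm : Type
  | var : Nat → Tm
  | lam : Tm → Tm
  | app : Tm → Tm → Tm
deriving DecidableEq

/-- Shift the free variables (those ≥ `c`) of a term up by one. -/
def lift (c : Nat) : Tm → Tm
  | .var n => if n < c then .var n else .var (n + 1)
  | .lam b => .lam (lift (c + 1) b)
  | .app m n => .app (lift c m) (lift c n)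

/-- Capture-avoiding substitution `[N/k]B` (de Bruijn). -/
def subst (N : Tm) (k : Nat) : Tm → Tm
  | .var n => if n < k then .var n else if n = k then N else .var (n - 1)
  | .lam b => .lam (subst (lift 0 N) (k + 1) b)
  | .app m n => .app (subst N k m) (subst N k n)
/-- Composition of big-step relations: `(Comp s2 s1) M N` iff
    there is `P` with `s1 M P` and `s2 P N`. -/
def Comp (s2 s1 : Tm → Tm → Prop) : Tm → Tm → Prop :=
  fun M N => ∃ P, s1 M P ∧ s2 P N

/-- The term `Ω = (λx.x x)(λx.x x)`. -/
def Omega : Tm :=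
  .app (.lam (.app (.var 0) (.var 0))) (.lam (.app (.var 0) (.var 0)))
/-- Call-by-name big-step relation. -/
inductive Bn : Tm → Tm → Prop
  | var : ∀ n, Bn (.var n) (.var n)
  | lam : ∀ B, Bn (.lam B) (.lam B)
  | beta : ∀ M N B B', Bn M (.lam B) → Bn (subst N 0 B) B' → Bn (.app M N) B'
  | neu : ∀ M N M', Bn M M' → (∀ B, M' ≠ .lam B) → Bn (.app M N) (.app M' N)
/-- The strategy IIS (weak, non-strict, non-head) as a big-step relation. -/
inductive IIS : Tm → Tm → Prop
  | var : ∀ n, IIS (.var n) (.var n)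
  | lam : ∀ B, IIS (.lam B) (.lam B)
  | beta : ∀ M N B B', IIS M (.lam B) → IIS (subst N 0 B) B' → IIS (.app M N) B'
  | neu : ∀ M N M' N', IIS M M' → (∀ B, M' ≠ .lam B) → IIS N N' →
      IIS (.app M N) (.app M' N')

/-- IIS absorbs call-by-name: `IIS(M) = N` iff there is `P` with
    `bn(M) = P` and `IIS(P) = N`; i.e. `IIS ∘ bn = IIS`. -/
theorem iis_absorbs_bn :
    (∀ M N : Tm, IIS M N ↔ ∃ P : Tm, Bn M P ∧ IIS P N) ∧
    Comp IIS Bn = IIS := by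
  have fwd : ∀ M N, IIS M N → ∃ P, Bn M P ∧ IIS P N := by
    intro M N h
    induction h with
    | var n => exact ⟨_, Bn.var n, IIS.var n⟩
    | lam B => exact ⟨_, Bn.lam B, IIS.lam B⟩
    | beta M N B B' h1 h2 ih1 ih2 =>
      obtain ⟨P, hbn, hiis⟩ := ih1
      by_cases hl : ∃ B0, P = Tm.lam B0
      · obtain ⟨B0, rfl⟩ := hl
        cases hiis
        obtain ⟨Q, hbn2, hiis2⟩ := ih2
        exact ⟨Q, Bn.beta _ _ _ _ hbn hbn2, hiis2⟩
      · push_neg at hl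
        exact ⟨_, Bn.neu _ _ _ hbn hl, IIS.beta _ _ _ _ hiis h2⟩
    | neu M N M' N' h1 hne h2 ih1 ih2 =>
      obtain ⟨P, hbn, hiis⟩ := ih1
      have hPl : ∀ B, P ≠ Tm.lam B := by
        intro B hB; subst hB; cases hiis; exact hne _ rfl
      exact ⟨_, Bn.neu _ _ _ hbn hPl, IIS.neu _ _ _ _ hiis hne h2⟩
  have bwd : ∀ M P, Bn M P → ∀ N, IIS P N → IIS M N := by
    intro M P h
    induction h with
    | var n => intro N h; exact h
    | lam B => intro N h; exact h
    | beta M N0 B B' h1 h2 ih1 ih2 =>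
      intro N h
      exact IIS.beta _ _ _ _ (ih1 _ (IIS.lam B)) (ih2 _ h)
    | neu M N0 M' h1 hne ih =>
      intro N h
      cases h with
      | beta _ _ B B' hB hsub => exact IIS.beta _ _ _ _ (ih _ hB) hsub
      | neu _ _ M'' N' hM hne2 hN => exact IIS.neu _ _ _ _ (ih _ hM) hne2 hN
  refine ⟨fun M N => ⟨fun h => fwd M N h, fun ⟨P, h1, h2⟩ => bwd M P h1 N h2⟩, ?_⟩
  funext M N
  exact propext ⟨fun ⟨P, h1, h2⟩ => bwd M P h1 N h2, fun h => fwd M N h⟩
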